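/- arXiv:2503.18214 — 3 statements merged into one kernel-verified Lean document; each statement's English description precedes it below -/
import Mathlib

section
/- For every natural number i ≥ 1 there is no digraph homomorphism from Q_i to Q_{i+1}, where Q_i = O_{11(01)^i 1}. -/
/-- A digraph homomorphism from `(V, E)` to `(W, F)`. -/
def DigraphHom {V W : Type*} (E : V → V → Prop) (F : W → W → Prop) (h : V → W) : Prop :=
  ∀ u v, E u v → F (h u) (h v)

/-- There exists a digraph homomorphism from `(V, E)` to `(W, F)`. -/
def HomEx {V W : Type*} (E : V → V → Prop) (F : W → W → Prop) : Prop :=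
  ∃ h : V → W, DigraphHom E F h

/-- The oriented path `O_s` for a word `s ∈ {0,1}^n`: vertices `0, …, n`, and for
each `j < n` the edge `j → j+1` if `s_j = 1` (true) and `j+1 → j` if `s_j = 0` (false). -/
def OPath (s : List Bool) (u v : Fin (s.length + 1)) : Prop :=
  ∃ j : Fin s.length,
    (s.get j = true ∧ (u : ℕ) = (j : ℕ) ∧ (v : ℕ) = (j : ℕ) + 1) ∨
    (s.get j = false ∧ (u : ℕ) = (j : ℕ) + 1 ∧ (v : ℕ) = (j : ℕ))

/-- The word `1^n`, so that `OPath (PWord n)` is the directed path `P_n`. -/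
def PWord (n : ℕ) : List Bool := List.replicate n true

/-- The word `(01)^i 1`. -/
def QTail : ℕ → List Bool
  | 0 => [true]
  | i + 1 => false :: true :: QTail i

/-- The word `11(01)^i 1`, so that `OPath (QWord i)` is the oriented path
`Q_i = O_{11(01)^i 1}` for `i ≥ 1`, and `OPath (QWord 0)` is `Q_0 = P_3`. -/
def QWord (i : ℕ) : List Bool := true :: true :: QTail i

lemma QTail_length (i : ℕ) : (QTail i).length = 2*i+1 := by
  induction i with
  | zero => rfl
  | succ n ih =>
    simp [QTail, ih]
    omega

lemma QWord_length (i : ℕ) : (QWord i).length = 2*i+3 := by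
  simp [QWord, QTail_length]
  try omega

lemma QTail_get (i : ℕ) : ∀ (j : ℕ) (h : j < (QTail i).length),
    ((QTail i).get ⟨j, h⟩ = true ↔ (j % 2 = 1 ∨ j = 2*i)) := by
  induction i with
  | zero =>
    intro j h
    have : j = 0 := by have := h; simp [QTail] at this; omega
    subst this
    simp [QTail]
  | succ n ih =>
    intro j h
    match j with
    | 0 => simp [QTail]
    | 1 => simp [QTail]
    | (m+2) =>
      have h' : m < (QTail n).length := by
        rw [QTail_length] at h ⊢; omega
      have e : (QTail (n+1)).get ⟨m+2, h⟩ = (QTail n).get ⟨m, h'⟩ := rfl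
      rw [e, ih m h']
      omega

lemma QWord_get (i : ℕ) (j : ℕ) (h : j < (QWord i).length) :
    ((QWord i).get ⟨j, h⟩ = true ↔ (j ≤ 1 ∨ j % 2 = 1 ∨ j = 2*i+2)) := by
  match j with
  | 0 => simp [QWord]
  | 1 => simp [QWord]
  | (m+2) =>
    have h' : m < (QTail i).length := by
      rw [QTail_length]; rw [QWord_length] at h; omega
    have e : (QWord i).get ⟨m+2, h⟩ = (QTail i).get ⟨m, h'⟩ := rfl
    rw [e, QTail_get i m h']
    omega

lemma OPath_iff (i : ℕ) (u v : Fin ((QWord i).length + 1)) :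
    OPath (QWord i) u v ↔
      ((v : ℕ) = (u : ℕ) + 1 ∧ (u : ℕ) < 2*i+3 ∧
        ((u:ℕ) ≤ 1 ∨ (u:ℕ) % 2 = 1 ∨ (u:ℕ) = 2*i+2)) ∨
      ((u : ℕ) = (v : ℕ) + 1 ∧ (v : ℕ) < 2*i+3 ∧
        ¬((v:ℕ) ≤ 1 ∨ (v:ℕ) % 2 = 1 ∨ (v:ℕ) = 2*i+2)) := by
  constructor
  · rintro ⟨j, ⟨hb, hu, hv⟩ | ⟨hb, hu, hv⟩⟩
    · left
      have hj3 : (j:ℕ) < 2*i+3 := by have := j.isLt; have hl := QWord_length i; omega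
      have hget : (j:ℕ) ≤ 1 ∨ (j:ℕ) % 2 = 1 ∨ (j:ℕ) = 2*i+2 :=
        (QWord_get i j.1 j.2).mp hb
      omega
    · right
      have hj3 : (j:ℕ) < 2*i+3 := by have := j.isLt; have hl := QWord_length i; omega
      have hbt : ¬((QWord i).get ⟨j.1, j.2⟩ = true) := by
        rw [show ((QWord i).get ⟨j.1, j.2⟩) = false from hb]; simp
      have hget : ¬((j:ℕ) ≤ 1 ∨ (j:ℕ) % 2 = 1 ∨ (j:ℕ) = 2*i+2) :=
        fun hr => hbt ((QWord_get i j.1 j.2).mpr hr)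
      omega
  · rintro (⟨hv, hu3, hcond⟩ | ⟨hu, hv3, hcond⟩)
    · have hlt : (u:ℕ) < (QWord i).length := by have hl := QWord_length i; omega
      exact ⟨⟨(u:ℕ), hlt⟩, Or.inl ⟨(QWord_get i (u:ℕ) hlt).mpr hcond, rfl, hv⟩⟩
    · have hlt : (v:ℕ) < (QWord i).length := by have hl := QWord_length i; omega
      have hnt : ¬((QWord i).get ⟨(v:ℕ), hlt⟩ = true) :=
        fun ht => hcond ((QWord_get i (v:ℕ) hlt).mp ht)
      exact ⟨⟨(v:ℕ), hlt⟩, Or.inr ⟨by simpa using hnt, hu, rfl⟩⟩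

theorem stmt_4 (i : ℕ) (hi : 1 ≤ i) :
    ¬ HomEx (OPath (QWord i)) (OPath (QWord (i + 1))) := by
  rintro ⟨h, hh⟩
  have hls : (QWord i).length = 2*i+3 := QWord_length i
  have hlt : (QWord (i+1)).length = 2*i+5 := by rw [QWord_length]; ring
  have hsz : 0 < (QWord i).length + 1 := Nat.succ_pos _
  let vS : ℕ → Fin ((QWord i).length + 1) :=
    fun p => ⟨p % ((QWord i).length + 1), Nat.mod_lt _ hsz⟩
  let a : ℕ → ℕ := fun p => ((h (vS p)) : ℕ)
  have hvS : ∀ p, p ≤ 2*i+3 → ((vS p : ℕ)) = p := by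
    intro p hp
    show p % ((QWord i).length + 1) = p
    apply Nat.mod_eq_of_lt; omega
  have ha_lt : ∀ p, a p < 2*i+6 := by
    intro p
    have hb := (h (vS p)).isLt
    show ((h (vS p)) : ℕ) < 2*i+6
    omega
  have step : ∀ p q : ℕ, p ≤ 2*i+3 → q ≤ 2*i+3 →
      ((q = p + 1 ∧ p < 2*i+3 ∧ (p ≤ 1 ∨ p % 2 = 1 ∨ p = 2*i+2)) ∨
       (p = q + 1 ∧ q < 2*i+3 ∧ ¬(q ≤ 1 ∨ q % 2 = 1 ∨ q = 2*i+2))) →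
      ((a q = a p + 1 ∧ a p < 2*i+5 ∧ (a p ≤ 1 ∨ a p % 2 = 1 ∨ a p = 2*i+4)) ∨
       (a p = a q + 1 ∧ a q < 2*i+5 ∧ ¬(a q ≤ 1 ∨ a q % 2 = 1 ∨ a q = 2*i+4))) := by
    intro p q hp hq hpq
    have hedge : OPath (QWord i) (vS p) (vS q) := by
      rw [OPath_iff, hvS p hp, hvS q hq]
      exact hpq
    have hF := (OPath_iff (i+1) _ _).mp (hh _ _ hedge)
    have e3 : 2*(i+1)+3 = 2*i+5 := by ring
    have e2 : 2*(i+1)+2 = 2*i+4 := by ring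
    rw [e3, e2] at hF
    exact hF
  have s01 := step 0 1 (by omega) (by omega) (by omega)
  have s12 := step 1 2 (by omega) (by omega) (by omega)
  have sE1 := step (2*i+1) (2*i+2) (by omega) (by omega) (by omega)
  have sE2 := step (2*i+2) (2*i+3) (by omega) (by omega) (by omega)
  have b0 := ha_lt 0
  have b1 := ha_lt 1
  have b2 := ha_lt 2
  have bE1 := ha_lt (2*i+1)
  have bE2 := ha_lt (2*i+2)
  have bE3 := ha_lt (2*i+3)
  have h1 : a 1 = 1 ∨ a 1 = 2*i+4 := by omega
  rcases h1 with h1 | h1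
  · -- case a 1 = 1
    have ha2 : a 2 = 2 := by omega
    have fwd : ∀ k, k ≤ i → a (2*k+2) ≤ 2*k+2 := by
      intro k
      induction k with
      | zero =>
        intro _
        have e : 2*0+2 = 2 := rfl
        rw [e]; omega
      | succ n ih =>
        intro hk
        have h4 := ih (by omega)
        have t1 := step (2*n+3) (2*n+2) (by omega) (by omega) (by omega)
        have t2 := step (2*n+3) (2*n+4) (by omega) (by omega) (by omega)
        have e : 2*(n+1)+2 = 2*n+4 := by ring
        rw [e]
        omega
    have hTop : a (2*i+2) = 1 := by
      have t := fwd i le_rfl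
      omega
    have down : ∀ j, j ≤ i → a (2*(i-j)+2) = 1 := by
      intro j
      induction j with
      | zero =>
        intro _
        have e : i - 0 = i := rfl
        rw [e]
        exact hTop
      | succ n ih =>
        intro hj
        have h4 := ih (by omega)
        set K := i - (n+1) with hKdef
        have e1 : 2*(i-n)+2 = 2*K+4 := by omega
        rw [e1] at h4
        have t1 := step (2*K+3) (2*K+4) (by omega) (by omega) (by omega)
        have t2 := step (2*K+3) (2*K+2) (by omega) (by omega) (by omega)
        have c1 := ha_lt (2*K+3)
        have c2 := ha_lt (2*K+2)
        omega
    have hfin := down i le_rfl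
    rw [Nat.sub_self] at hfin
    have e : 2*0+2 = 2 := rfl
    rw [e] at hfin
    omega
  · -- case a 1 = 2i+4
    have ha2 : a 2 = 2*i+5 := by omega
    have up : ∀ k, k ≤ i → a (2*k+2) = 2*i+5 := by
      intro k
      induction k with
      | zero =>
        intro _
        have e : 2*0+2 = 2 := rfl
        rw [e]
        exact ha2
      | succ n ih =>
        intro hk
        have h4 := ih (by omega)
        have t1 := step (2*n+3) (2*n+2) (by omega) (by omega) (by omega)
        have t2 := step (2*n+3) (2*n+4) (by omega) (by omega) (by omega)
        have c1 := ha_lt (2*n+3)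
        have c2 := ha_lt (2*n+4)
        have e : 2*(n+1)+2 = 2*n+4 := by ring
        rw [e]
        omega
    have hAtop : a (2*i+2) = 2*i+5 := up i le_rfl
    omega
end

section
/- The containment order on oriented paths fails the ascending chain condition: for the sequence Q_0 = P_3, Q_i = O_{11(01)^i 1} (i ≥ 1), one has, for every i ≥ 0, Q_i ⊑ Q_{i+1} and Q_{i+1} ⋢ Q_i (i.e., there is a homomorphism from Q_{i+1} to Q_i but none from Q_i to Q_{i+1}); hence Q_0 ⊏ Q_1 ⊏ Q_2 ⊏ ⋯ is an infinite strictly ascending chain under ⊑. -/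
lemma lenQTail (i : ℕ) : (QTail i).length = 2 * i + 1 := by
  induction i with
  | zero => rfl
  | succ n ih =>
    have h : (QTail (n + 1)).length = (QTail n).length + 2 := rfl
    omega

lemma lenQ (i : ℕ) : (QWord i).length = 2 * i + 3 := by
  have h : (QWord i).length = (QTail i).length + 2 := rfl
  have := lenQTail i
  omega

lemma getQTail (i : ℕ) : ∀ (j : ℕ) (hj : j < (QTail i).length),
    ((QTail i).get ⟨j, hj⟩ = true ↔ (j % 2 = 1 ∨ j = 2 * i)) := by
  induction i with
  | zero =>
    intro j hj
    simp only [QTail, List.length_singleton] at hj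
    interval_cases j
    · simp [QTail]
  | succ n ih =>
    intro j hj
    match j with
    | 0 => simp [QTail]
    | 1 => simp only [QTail]; simp
    | (j+2) =>
      have h2 : j < (QTail n).length := by
        simp only [QTail, List.length_cons] at hj; omega
      have hrw : (QTail (n+1)).get ⟨j+2, hj⟩ = (QTail n).get ⟨j, h2⟩ := rfl
      rw [hrw, ih j h2]
      omega

lemma getQ (i : ℕ) : ∀ (j : ℕ) (hj : j < (QWord i).length),
    ((QWord i).get ⟨j, hj⟩ = true ↔ (j = 0 ∨ j % 2 = 1 ∨ j = 2 * i + 2)) := by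
  intro j hj
  match j with
  | 0 => simp [QWord]
  | 1 => simp [QWord]
  | (j+2) =>
    have h2 : j < (QTail i).length := by
      simp only [QWord, List.length_cons] at hj; omega
    have hrw : (QWord i).get ⟨j+2, hj⟩ = (QTail i).get ⟨j, h2⟩ := rfl
    rw [hrw, getQTail i j h2]
    omega

/-- Arithmetic description of the edge relation of `Q_i`. -/
def EdgeQ (i a b : ℕ) : Prop :=
  (a < 2 * i + 3 ∧ (a = 0 ∨ a % 2 = 1 ∨ a = 2 * i + 2) ∧ b = a + 1) ∨
  (b < 2 * i + 3 ∧ ¬(b = 0 ∨ b % 2 = 1 ∨ b = 2 * i + 2) ∧ a = b + 1)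

lemma opath_iff (i : ℕ) (u v : Fin ((QWord i).length + 1)) :
    OPath (QWord i) u v ↔ EdgeQ i (u : ℕ) (v : ℕ) := by
  have hlen := lenQ i
  constructor
  · rintro ⟨j, hj⟩
    have hjlt : (j : ℕ) < 2 * i + 3 := by omega
    have hget := getQ i (j : ℕ) j.2
    rcases hj with ⟨ht, hu, hv⟩ | ⟨hf, hu, hv⟩
    · left
      have : (j : ℕ) = 0 ∨ (j : ℕ) % 2 = 1 ∨ (j : ℕ) = 2 * i + 2 := by
        apply hget.mp
        exact ht
      omega
    · right
      have : ¬((j : ℕ) = 0 ∨ (j : ℕ) % 2 = 1 ∨ (j : ℕ) = 2 * i + 2) := by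
        intro hc
        have := hget.mpr hc
        rw [this] at hf
        exact Bool.true_eq_false.mp hf |>.elim
      omega
  · rintro (⟨ha, hcond, hb⟩ | ⟨hb, hcond, ha⟩)
    · refine ⟨⟨(u : ℕ), by omega⟩, Or.inl ⟨?_, rfl, hb⟩⟩
      exact (getQ i (u : ℕ) (by omega)).mpr hcond
    · refine ⟨⟨(v : ℕ), by omega⟩, Or.inr ⟨?_, ha, rfl⟩⟩
      have := getQ i (v : ℕ) (show (v : ℕ) < (QWord i).length by omega)
      rcases Bool.eq_false_or_eq_true ((QWord i).get ⟨(v : ℕ), by omega⟩) with h | h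
      · exact absurd (this.mp h) hcond
      · exact h

/-- Level function on the vertices of `Q_{i+1}`. -/
def Lev (i n : ℕ) : ℕ :=
  if n = 0 then 0 else if n = 2 * i + 5 then 3 else if n % 2 = 1 then 1 else 2

lemma levStep (i a b : ℕ) (e : EdgeQ (i + 1) a b) : Lev i b = Lev i a + 1 := by
  unfold EdgeQ at e
  unfold Lev
  split_ifs <;> omega

theorem stmt_5 (i : ℕ) :
    HomEx (OPath (QWord (i + 1))) (OPath (QWord i)) ∧
    ¬ HomEx (OPath (QWord i)) (OPath (QWord (i + 1))) := by
  constructor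
  · -- homomorphism Q_{i+1} → Q_i : fold the last zigzag
    refine ⟨fun v => ⟨if (v : ℕ) ≤ 2 * i + 2 then (v : ℕ) else (v : ℕ) - 2, ?_⟩, ?_⟩
    · have hv := v.2
      have h1 := lenQ (i + 1)
      have h2 := lenQ i
      split <;> omega
    · intro u v e
      rw [opath_iff] at e ⊢
      simp only [EdgeQ] at e ⊢
      split_ifs <;> omega
  · -- no homomorphism Q_i → Q_{i+1}
    rintro ⟨h, hh⟩
    set g : ℕ → ℕ := fun n =>
      if hn : n < 2 * i + 4 then ((h ⟨n, by rw [lenQ]; omega⟩ : Fin _) : ℕ) else 0 with hgdef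
    have key : ∀ a b, a < 2 * i + 4 → b < 2 * i + 4 → EdgeQ i a b →
        EdgeQ (i + 1) (g a) (g b) := by
      intro a b ha hb hab
      have h1 := hh ⟨a, by rw [lenQ]; omega⟩ ⟨b, by rw [lenQ]; omega⟩
        ((opath_iff i ⟨a, by rw [lenQ]; omega⟩ ⟨b, by rw [lenQ]; omega⟩).mpr hab)
      rw [opath_iff] at h1
      have hga : g a = ((h ⟨a, by rw [lenQ]; omega⟩ : Fin _) : ℕ) := by
        simp [hgdef, ha]
      have hgb : g b = ((h ⟨b, by rw [lenQ]; omega⟩ : Fin _) : ℕ) := by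
        simp [hgdef, hb]
      rw [hga, hgb]
      exact h1
    -- basic edges of Q_i
    have e01 : EdgeQ i 0 1 := by unfold EdgeQ; omega
    have e12 : EdgeQ i 1 2 := by unfold EdgeQ; omega
    have eFin : EdgeQ i (2 * i + 2) (2 * i + 3) := by unfold EdgeQ; omega
    have eDown : ∀ k, k < i → EdgeQ i (2 * k + 3) (2 * k + 2) := by
      intro k hk; unfold EdgeQ; omega
    have eUp : ∀ k, k < i → EdgeQ i (2 * k + 3) (2 * k + 4) := by
      intro k hk; unfold EdgeQ; omega
    -- level chain
    have chain : ∀ k, k ≤ i → Lev i (g (2 * k + 2)) = Lev i (g 0) + 2 := by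
      intro k
      induction k with
      | zero =>
        intro _
        have s1 := levStep i _ _ (key 0 1 (by omega) (by omega) e01)
        have s2 := levStep i _ _ (key 1 2 (by omega) (by omega) e12)
        show Lev i (g 2) = Lev i (g 0) + 2
        omega
      | succ k ih =>
        intro hk
        have hki : k < i := by omega
        have ih' := ih (by omega)
        have s3 := levStep i _ _
          (key (2 * k + 3) (2 * k + 2) (by omega) (by omega) (eDown k hki))
        have s4 := levStep i _ _
          (key (2 * k + 3) (2 * k + 4) (by omega) (by omega) (eUp k hki))
        show Lev i (g (2 * k + 4)) = Lev i (g 0) + 2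
        omega
    have sFin := levStep i _ _
      (key (2 * i + 2) (2 * i + 3) (by omega) (by omega) eFin)
    have chainI := chain i le_rfl
    have lb : ∀ n, Lev i n ≤ 3 := by intro n; unfold Lev; split_ifs <;> omega
    have lev0 : ∀ n, Lev i n = 0 → n = 0 := by
      intro n hn; unfold Lev at hn; split_ifs at hn; omega
    have lev3 : ∀ n, Lev i n = 3 → n = 2 * i + 5 := by
      intro n hn; unfold Lev at hn; split_ifs at hn <;> omega
    have hc0 : Lev i (g 0) = 0 := by have := lb (g (2 * i + 3)); omega
    have hg0 : g 0 = 0 := lev0 _ hc0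
    have hglast : g (2 * i + 3) = 2 * i + 5 := by
      apply lev3; omega
    -- pin down g 1, g 2, g (2i+2)
    have hg1 : g 1 = 1 := by
      have := key 0 1 (by omega) (by omega) e01
      rw [hg0] at this
      unfold EdgeQ at this; omega
    have hg2 : g 2 = 2 := by
      have := key 1 2 (by omega) (by omega) e12
      rw [hg1] at this
      unfold EdgeQ at this; omega
    have hg22 : g (2 * i + 2) = 2 * i + 4 := by
      have := key (2 * i + 2) (2 * i + 3) (by omega) (by omega) eFin
      rw [hglast] at this
      unfold EdgeQ at this; omega
    -- step bound
    have step : ∀ k, k < i → g (2 * k + 4) ≤ g (2 * k + 2) + 2 := by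
      intro k hk
      have t1 := key (2 * k + 3) (2 * k + 2) (by omega) (by omega) (eDown k hk)
      have t2 := key (2 * k + 3) (2 * k + 4) (by omega) (by omega) (eUp k hk)
      unfold EdgeQ at t1 t2; omega
    have mono : ∀ k, k ≤ i → g (2 * k + 2) ≤ 2 * k + 2 := by
      intro k
      induction k with
      | zero => intro _; simpa using hg2.le
      | succ k ih =>
        intro hk
        have := step k (by omega)
        have := ih (by omega)
        show g (2 * k + 4) ≤ 2 * k + 4
        omega
    have := mono i le_rfl
    omega
end

section
/- Let Q be a minimal 2CQ, let Q' be a type-2 restriction of Q, and let Q'' be either another type-2 restriction of Q not isomorphic to Q' (i.e., adding an atom with a different relation name) or a member of the reduced set of type-1/3/4 restrictions of Q. Then: (1) Q' is minimal; (2) there is no homomorphism from Q' to Q; and (3) Q' and Q'' are incomparable, i.e., Q' ⋢ Q'' and Q'' ⋢ Q'. -/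
/-- A relational schema: a finite set of relation names, each with an arity.
Variables are taken to be natural numbers (a countably infinite set). -/
structure Schema where
  Rel : Type
  finRel : Finite Rel
  ar : Rel → ℕ

/-- An atom over schema `σ`: a relation name together with a tuple of variables. -/
abbrev Atom (σ : Schema) := Σ R : σ.Rel, Fin (σ.ar R) → ℕ

/-- A conjunctive query of arity `α` over schema `σ`: a head tuple of variables and
a finite set of body atoms, such that every head variable occurs in some body atom. -/
structure CQ (σ : Schema) (α : ℕ) where
  head : Fin α → ℕ
  body : Set (Atom σ)
  finite_body : body.Finite
  head_occurs : ∀ i : Fin α, ∃ a ∈ body, ∃ j, a.2 j = head i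

/-- The set of variables occurring in a CQ. -/
def CQ.vars {σ : Schema} {α : ℕ} (Q : CQ σ α) : Set ℕ :=
  {v | ∃ a ∈ Q.body, ∃ j, a.2 j = v}

/-- `h` is a homomorphism from `Q₂` to `Q₁`: it sends every atom `R(x̄)` of `Q₂` to an
atom `R(h(x̄))` of `Q₁`, and `h(head Q₂) = head Q₁`. -/
def CQHom {σ : Schema} {α : ℕ} (Q₂ Q₁ : CQ σ α) (h : ℕ → ℕ) : Prop :=
  (∀ a ∈ Q₂.body, (⟨a.1, h ∘ a.2⟩ : Atom σ) ∈ Q₁.body) ∧ h ∘ Q₂.head = Q₁.head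

/-- Containment `Q₁ ⊑ Q₂`: there is a homomorphism from `Q₂` to `Q₁`. -/
def Contained {σ : Schema} {α : ℕ} (Q₁ Q₂ : CQ σ α) : Prop :=
  ∃ h : ℕ → ℕ, CQHom Q₂ Q₁ h

/-- Equivalence `Q₁ ≡ Q₂`: containment in both directions. -/
def CQEquiv {σ : Schema} {α : ℕ} (Q₁ Q₂ : CQ σ α) : Prop :=
  Contained Q₁ Q₂ ∧ Contained Q₂ Q₁

/-- Maximal containment `Q₁ ⊑ₘ Q₂`. -/
def MaxContained {σ : Schema} {α : ℕ} (Q₁ Q₂ : CQ σ α) : Prop :=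
  Contained Q₁ Q₂ ∧ ¬ Contained Q₂ Q₁ ∧
  ∀ Q : CQ σ α, Contained Q₁ Q → Contained Q Q₂ → CQEquiv Q Q₁ ∨ CQEquiv Q Q₂

/-- A 2CQ: each relation name occurs in at most two body atoms. -/
def Is2CQ {σ : Schema} {α : ℕ} (Q : CQ σ α) : Prop :=
  ∀ T : σ.Rel, {a ∈ Q.body | a.1 = T}.ncard ≤ 2

/-- A CQ is minimal if no CQ with the same head and a proper subset of its body
atoms is equivalent to it. -/
def CQMinimal {σ : Schema} {α : ℕ} (Q : CQ σ α) : Prop :=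
  ∀ Q' : CQ σ α, Q'.head = Q.head → Q'.body ⊂ Q.body → ¬ CQEquiv Q' Q

/-- `C` is a core of `Q`: a minimal CQ equivalent to `Q`. -/
def IsCoreOf {σ : Schema} {α : ℕ} (C Q : CQ σ α) : Prop :=
  CQMinimal C ∧ CQEquiv C Q

/-- Type-1 restriction: identify one variable `y` with another, i.e. apply a
substitution `h` that is the identity except on `y`, where `h y` must be a
distinguished variable if `y` is. -/
def IsType1Restriction {σ : Schema} {α : ℕ} (Q R : CQ σ α) : Prop :=
  ∃ h : ℕ → ℕ, ∃ y : ℕ,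
    y ∈ Q.vars ∧ h y ≠ y ∧ h y ∈ Q.vars ∧ (∀ v, v ≠ y → h v = v) ∧
    ((∃ i, Q.head i = y) → ∃ i, Q.head i = h y) ∧
    R.head = h ∘ Q.head ∧
    R.body = {b | ∃ a ∈ Q.body, b = (⟨a.1, h ∘ a.2⟩ : Atom σ)}

/-- Type-2 restriction adding atom `T(ȳ)` for relation name `T` (which occurs in no
atom of `Q`), where `ȳ` is a tuple of distinct fresh variables. -/
def IsType2RestrictionWith {σ : Schema} {α : ℕ} (Q R : CQ σ α) (T : σ.Rel) : Prop :=
  (∀ a ∈ Q.body, a.1 ≠ T) ∧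
  ∃ y : Fin (σ.ar T) → ℕ, Function.Injective y ∧ (∀ j, y j ∉ Q.vars) ∧
    R.head = Q.head ∧ R.body = Q.body ∪ {(⟨T, y⟩ : Atom σ)}

/-- Type-2 restriction: add a fresh atom on a relation name not occurring in `Q`. -/
def IsType2Restriction {σ : Schema} {α : ℕ} (Q R : CQ σ α) : Prop :=
  ∃ T : σ.Rel, IsType2RestrictionWith Q R T

/-- Type-3 restriction: add an atom `T(h(ȳ))` where `T` occurs in exactly one atom of
`Q`, `ȳ` is a tuple of distinct fresh variables with variable set `Y`, and
`h : Y → vars(Q) ∪ Y` is the identity except on exactly one variable. -/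
def IsType3Restriction {σ : Schema} {α : ℕ} (Q R : CQ σ α) : Prop :=
  ∃ T : σ.Rel, {a ∈ Q.body | a.1 = T}.ncard = 1 ∧
  ∃ y : Fin (σ.ar T) → ℕ, Function.Injective y ∧ (∀ j, y j ∉ Q.vars) ∧
  ∃ h : ℕ → ℕ, ∃ j₀ : Fin (σ.ar T),
    h (y j₀) ≠ y j₀ ∧ h (y j₀) ∈ Q.vars ∪ Set.range y ∧
    (∀ j, j ≠ j₀ → h (y j) = y j) ∧
    R.head = Q.head ∧ R.body = Q.body ∪ {(⟨T, h ∘ y⟩ : Atom σ)}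

/-- Type-4 restriction: add two atoms `T₁(h(ȳ₁))` and `T₂(ȳ₂)` where `T₁ ≠ T₂` each
occur in exactly one atom of `Q`, `ȳ₁, ȳ₂` are tuples of distinct fresh variables
(with variable sets `Y₁, Y₂`), and `h : Y₁ → Y₁ ∪ Y₂` is the identity except on
exactly one variable, which is mapped to a variable of `Y₂`. -/
def IsType4Restriction {σ : Schema} {α : ℕ} (Q R : CQ σ α) : Prop :=
  ∃ T₁ T₂ : σ.Rel, T₁ ≠ T₂ ∧
    {a ∈ Q.body | a.1 = T₁}.ncard = 1 ∧ {a ∈ Q.body | a.1 = T₂}.ncard = 1 ∧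
  ∃ y₁ : Fin (σ.ar T₁) → ℕ, ∃ y₂ : Fin (σ.ar T₂) → ℕ,
    Function.Injective y₁ ∧ Function.Injective y₂ ∧
    (∀ j, y₁ j ∉ Q.vars) ∧ (∀ j, y₂ j ∉ Q.vars) ∧
    (∀ j k, y₁ j ≠ y₂ k) ∧
  ∃ h : ℕ → ℕ, ∃ j₀ : Fin (σ.ar T₁),
    (∃ k, h (y₁ j₀) = y₂ k) ∧ (∀ j, j ≠ j₀ → h (y₁ j) = y₁ j) ∧
    R.head = Q.head ∧
    R.body = Q.body ∪ {(⟨T₁, h ∘ y₁⟩ : Atom σ), (⟨T₂, y₂⟩ : Atom σ)}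

/-- A restriction of type 1, 3 or 4. -/
def IsType134Restriction {σ : Schema} {α : ℕ} (Q R : CQ σ α) : Prop :=
  IsType1Restriction Q R ∨ IsType3Restriction Q R ∨ IsType4Restriction Q R

/-- A restriction (of any of the four types). -/
def IsRestriction {σ : Schema} {α : ℕ} (Q R : CQ σ α) : Prop :=
  IsType1Restriction Q R ∨ IsType2Restriction Q R ∨
  IsType3Restriction Q R ∨ IsType4Restriction Q R

/-- `Q'` belongs to the reduced set of type-1/3/4 restrictions of `Q`: `Q'` is the
core of a type-1/3/4 restriction of `Q`, `Q ⋢ Q'`, and there is no type-1/3/4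
restriction `Q''` of `Q` not equivalent to `Q'` with `Q' ⊑ Q''`. -/
def InReduced134 {σ : Schema} {α : ℕ} (Q Q' : CQ σ α) : Prop :=
  (∃ P : CQ σ α, IsType134Restriction Q P ∧ IsCoreOf Q' P) ∧
  ¬ Contained Q Q' ∧
  ¬ ∃ Q'' : CQ σ α, IsType134Restriction Q Q'' ∧ ¬ CQEquiv Q'' Q' ∧ Contained Q' Q''

/-- `Q'` belongs to `RR(Q)`, the reduced set of restrictions of `Q`: the union of the
type-2 restrictions of `Q` and the reduced set of type-1/3/4 restrictions of `Q`. -/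
def InRR {σ : Schema} {α : ℕ} (Q Q' : CQ σ α) : Prop :=
  IsType2Restriction Q Q' ∨ InReduced134 Q Q'

/-!
Homomorphisms preserve relation names, so a query without `T`-atoms never contains `Q'`, whose
new atom `T(ȳ)` has nowhere to go; this covers `Q`, a type-2 restriction on another name `T'`,
and anything equivalent to a type-1/3/4 restriction of `Q`. Conversely, a homomorphism from a
`T`-free query into `Q'` already lands in `Q`: for a type-2 restriction on `T'` this is excluded
by its own `T'`-atom, and for a member of the reduced set by `Q ⋢ Q''`. For minimality, an
endomorphism of `Q'` into a proper part of its body must fix `T(ȳ)`, so it restricts to an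
endomorphism of `Q` into a proper part of its body.
-/

namespace CQ

variable {σ : Schema} {α : ℕ}

def Avoids (Q : CQ σ α) (T : σ.Rel) : Prop :=
  ∀ a ∈ Q.body, a.1 ≠ T

theorem not_avoids_of_mem {Q : CQ σ α} {a : Atom σ} (ha : a ∈ Q.body) : ¬ Q.Avoids a.1 :=
  fun h => h a ha rfl

theorem Avoids.of_cqHom {Q₁ Q₂ : CQ σ α} {T : σ.Rel} {h : ℕ → ℕ} (hh : CQHom Q₂ Q₁ h)
    (hQ₁ : Q₁.Avoids T) : Q₂.Avoids T :=
  fun a ha => hQ₁ ⟨a.1, h ∘ a.2⟩ (hh.1 a ha)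

theorem not_contained_of_avoids {Q₁ Q₂ : CQ σ α} {T : σ.Rel} (hQ₁ : Q₁.Avoids T)
    (hQ₂ : ¬ Q₂.Avoids T) : ¬ Contained Q₁ Q₂ :=
  fun ⟨_, hh⟩ => hQ₂ (hQ₁.of_cqHom hh)

theorem Avoids.ne_of_ncard_eq_one {Q : CQ σ α} {T T' : σ.Rel} (hQ : Q.Avoids T)
    (hT' : {a ∈ Q.body | a.1 = T'}.ncard = 1) : T' ≠ T := by
  obtain ⟨a, ⟨ha, rfl⟩⟩ := Set.nonempty_of_ncard_ne_zero (hT' ▸ one_ne_zero)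
  exact hQ a ha

theorem Avoids.of_type134 {Q P : CQ σ α} {T : σ.Rel} (hQ : Q.Avoids T)
    (hP : IsType134Restriction Q P) : P.Avoids T := by
  rcases hP with ⟨f, _, _, _, _, _, _, _, hbody⟩ | ⟨T₃, hT₃, _, _, _, _, _, _, _, _, _, hbody⟩ |
    ⟨T₁, T₂, _, hT₁, hT₂, _, _, _, _, _, _, _, _, _, _, _, _, hbody⟩ <;> rw [Avoids, hbody]
  · rintro _ ⟨a, ha, rfl⟩
    exact hQ a ha
  · rintro a (ha | rfl)
    exacts [hQ a ha, hQ.ne_of_ncard_eq_one hT₃]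
  · rintro a (ha | rfl | rfl)
    exacts [hQ a ha, hQ.ne_of_ncard_eq_one hT₁, hQ.ne_of_ncard_eq_one hT₂]

theorem _root_.CQMinimal.eq_body_of_mapsTo {Q : CQ σ α} (hQ : CQMinimal Q) {B : Set (Atom σ)}
    (hB : B ⊆ Q.body) {f : ℕ → ℕ} (hf : ∀ a ∈ Q.body, (⟨a.1, f ∘ a.2⟩ : Atom σ) ∈ B)
    (hfh : f ∘ Q.head = Q.head) : B = Q.body := by
  by_contra hne
  have occurs (i : Fin α) : ∃ a ∈ B, ∃ j, a.2 j = Q.head i := by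
    obtain ⟨a, ha, j, hj⟩ := Q.head_occurs i
    exact ⟨_, hf a ha, j, (congrArg f hj).trans (congrFun hfh i)⟩
  exact hQ ⟨Q.head, B, Q.finite_body.subset hB, occurs⟩ rfl (hB.ssubset_of_ne hne)
    ⟨⟨f, hf, hfh⟩, ⟨id, fun _ ha => hB ha, rfl⟩⟩

section Adjoin

variable {Q Q' : CQ σ α} {T : σ.Rel} {y : Fin (σ.ar T) → ℕ}

theorem self_mem_adjoin (hbody : Q'.body = Q.body ∪ {⟨T, y⟩}) : (⟨T, y⟩ : Atom σ) ∈ Q'.body :=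
  hbody ▸ Or.inr rfl

theorem mem_of_mem_adjoin (hbody : Q'.body = Q.body ∪ {⟨T, y⟩}) {a : Atom σ}
    (ha : a ∈ Q'.body) (haT : a.1 ≠ T) : a ∈ Q.body := by
  rw [hbody] at ha
  rcases ha with ha | rfl
  exacts [ha, absurd rfl haT]

theorem eq_of_mem_adjoin (hT : Q.Avoids T) (hbody : Q'.body = Q.body ∪ {⟨T, y⟩})
    {a : Atom σ} (ha : a ∈ Q'.body) (haT : a.1 = T) : a = ⟨T, y⟩ := by
  rw [hbody] at ha
  rcases ha with ha | rfl
  exacts [absurd haT (hT a ha), rfl]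

theorem Avoids.adjoin {T' : σ.Rel} (hQ : Q.Avoids T') (hT : T ≠ T')
    (hbody : Q'.body = Q.body ∪ {⟨T, y⟩}) : Q'.Avoids T' := by
  rw [Avoids, hbody]
  rintro a (ha | rfl)
  exacts [hQ a ha, hT]

theorem contained_of_contained_adjoin {R : CQ σ α} (hhead : Q'.head = Q.head)
    (hbody : Q'.body = Q.body ∪ {⟨T, y⟩}) (hR : R.Avoids T) (hQ'R : Contained Q' R) :
    Contained Q R := by
  obtain ⟨g, hg, hgh⟩ := hQ'R
  exact ⟨g, fun a ha => mem_of_mem_adjoin hbody (hg a ha) (hR a ha), hgh.trans hhead⟩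

theorem cqMinimal_adjoin (hT : Q.Avoids T) (hhead : Q'.head = Q.head)
    (hbody : Q'.body = Q.body ∪ {⟨T, y⟩}) (hQ : CQMinimal Q) : CQMinimal Q' := by
  rintro Q₀ hhead₀ hsub ⟨⟨f, hf, hfh⟩, -⟩
  have hfQ : f ∘ Q.head = Q.head := by rw [← hhead, hfh, hhead₀]
  have hyQ₀ : (⟨T, y⟩ : Atom σ) ∈ Q₀.body := by
    have h := hf ⟨T, y⟩ (self_mem_adjoin hbody)
    rwa [eq_of_mem_adjoin hT hbody (hsub.subset h) rfl] at h
  have hQQ₀ : {a ∈ Q₀.body | a.1 ≠ T} = Q.body :=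
    hQ.eq_body_of_mapsTo (fun a ha => mem_of_mem_adjoin hbody (hsub.subset ha.1) ha.2)
      (fun a ha => ⟨hf a (hbody ▸ Or.inl ha), hT a ha⟩) hfQ
  refine hsub.not_subset ?_
  rw [hbody, Set.union_subset_iff, Set.singleton_subset_iff, ← hQQ₀]
  exact ⟨Set.sep_subset _ _, hyQ₀⟩

end Adjoin

end CQ

open CQ in
theorem stmt_14_general {σ : Schema} {α : ℕ} (Q : CQ σ α) (hQmin : CQMinimal Q)
    (Q' Q'' : CQ σ α) (T : σ.Rel) (hQ' : IsType2RestrictionWith Q Q' T)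
    (hQ'' : (∃ T' : σ.Rel, T' ≠ T ∧ IsType2RestrictionWith Q Q'' T') ∨ InReduced134 Q Q'') :
    CQMinimal Q' ∧
    (¬ ∃ h : ℕ → ℕ, CQHom Q' Q h) ∧
    (¬ Contained Q' Q'' ∧ ¬ Contained Q'' Q') := by
  obtain ⟨hT, y, -, -, hhead, hbody⟩ := hQ'
  have hQ'T : ¬ Q'.Avoids T := not_avoids_of_mem (self_mem_adjoin hbody)
  refine ⟨cqMinimal_adjoin hT hhead hbody hQmin, not_contained_of_avoids hT hQ'T, ?_⟩
  rcases hQ'' with ⟨T', hT'T, hT', y', -, -, -, hbody'⟩ | ⟨⟨P, hP, -, -, g, hg⟩, hQQ'', -⟩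
  · have hQ''T : Q''.Avoids T := Avoids.adjoin hT hT'T hbody'
    have hQ'T' : Q'.Avoids T' := Avoids.adjoin hT' hT'T.symm hbody
    exact ⟨not_contained_of_avoids hQ'T' (not_avoids_of_mem (self_mem_adjoin hbody')),
      not_contained_of_avoids hQ''T hQ'T⟩
  · have hQ''T : Q''.Avoids T := (Avoids.of_type134 hT hP).of_cqHom hg
    exact ⟨fun h => hQQ'' (contained_of_contained_adjoin hhead hbody hQ''T h),
      not_contained_of_avoids hQ''T hQ'T⟩

theorem stmt_14 {σ : Schema} {α : ℕ} (Q : CQ σ α) (hQ2 : Is2CQ Q) (hQmin : CQMinimal Q)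
    (Q' Q'' : CQ σ α) (T : σ.Rel) (hQ' : IsType2RestrictionWith Q Q' T)
    (hQ'' : (∃ T' : σ.Rel, T' ≠ T ∧ IsType2RestrictionWith Q Q'' T') ∨ InReduced134 Q Q'') :
    CQMinimal Q' ∧
    (¬ ∃ h : ℕ → ℕ, CQHom Q' Q h) ∧
    (¬ Contained Q' Q'' ∧ ¬ Contained Q'' Q') :=
  stmt_14_general Q hQmin Q' Q'' T hQ' hQ''
end
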